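/- Let G = (X_L, X_R ∪ U, E) be a bipartite graph as in Proposition 1 and let Ĥ be the (n_V + r + 1) × (n_E + r) matrix of Proposition 2 (the augmented incidence matrix M with one extra row having entry 1 in the columns indexed by edges of E_1 ∪ … ∪ E_{r+1}, −1 in the last r columns, and 0 otherwise). Let Ĥ_{X_L} denote the submatrix of Ĥ consisting of the rows indexed by the vertices in X_L. Then the matrix obtained by stacking Ĥ, −Ĥ_{X_L}, and the identity matrix I_{n_E+r} is totally unimodular. -/

import Mathlib

/-- The side of a vertex in the bipartite graph `G = (X_L, X_R ∪ U, E)`. -/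
inductive BipSide : Type
  | XL  -- a vertex of `X_L`
  | XR  -- a vertex of `X_R`
  | UU  -- a vertex of `U`
deriving DecidableEq

/-- A bipartite graph `G = (X_L, X_R ∪ U, E)` with `n_V` vertices and `n_E` edges, in which
`X_L` is partitioned into `r + 1` disjoint subsets `X_L^{C_1}, …, X_L^{C_{r+1}}` and `U` is
partitioned into `r + 1` disjoint subsets `U^{C_1}, …, U^{C_{r+1}}`, and
`E = E_XX ∪ E_1 ∪ ⋯ ∪ E_{r+1}`, where `E_XX` is a set of edges between `X_L` and `X_R` and,
for each `i`, `E_i` is a set of edges between `X_L^{C_i}` and `U^{C_i}`.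
Vertices are written `v_1, …, v_{n_V}` (i.e. indexed by `Fin nV`) and edges `e_1, …, e_{n_E}`
(indexed by `Fin nE`).  `side v` tells which of `X_L`, `X_R`, `U` the vertex `v` lies in;
`group v` tells which cell `C_i` of the partition a vertex of `X_L` (resp. of `U`) lies in;
`endL e` and `endR e` are the two endpoints of the edge `e` (in `X_L` and in `X_R ∪ U`
respectively); `eClass e = none` means `e ∈ E_XX` while `eClass e = some i` means `e ∈ E_{i+1}`. -/
structure SCCBipartite (nV nE r : ℕ) : Type where
  side : Fin nV → BipSide
  group : Fin nV → Fin (r + 1)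
  endL : Fin nE → Fin nV
  endR : Fin nE → Fin nV
  eClass : Fin nE → Option (Fin (r + 1))
  endL_XL : ∀ e, side (endL e) = BipSide.XL
  eXX_mem : ∀ e, eClass e = none → side (endR e) = BipSide.XR
  eI_mem : ∀ e i, eClass e = some i →
    side (endR e) = BipSide.UU ∧ group (endL e) = i ∧ group (endR e) = i
  edge_inj : Function.Injective fun e => (endL e, endR e)

/-- The augmented incidence matrix `M` of such a bipartite graph: an
`(n_V + r) × (n_E + r)` integer matrix with `M i j = 1` if `i ≤ n_V`, `j ≤ n_E` and `v_i` is an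
endpoint of `e_j`; `M i j = -1` if `i > n_V` and `e_j ∈ E_{i - n_V}`; `M i j = 1` if `i > n_V`
and `j = n_E + i - n_V`; and `M i j = 0` otherwise. -/
def augM {nV nE r : ℕ} (G : SCCBipartite nV nE r) : Matrix (Fin (nV + r)) (Fin (nE + r)) ℤ :=
  Matrix.of fun i j =>
    if hi : (i : ℕ) < nV then
      if hj : (j : ℕ) < nE then
        (if G.endL ⟨j, hj⟩ = ⟨i, hi⟩ ∨ G.endR ⟨j, hj⟩ = ⟨i, hi⟩ then 1 else 0)
      else 0
    else
      if hj : (j : ℕ) < nE then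
        (if G.eClass ⟨j, hj⟩ = some ⟨(i : ℕ) - nV, by have := i.isLt; omega⟩ then -1 else 0)
      else (if (i : ℕ) - nV = (j : ℕ) - nE then 1 else 0)
/-- The matrix `Ĥ` of Proposition 2: the augmented incidence matrix `M` with one extra (last)
row, whose entry in column `j` is `1` if the `j`-th column corresponds to an edge
`e_j ∈ E_1 ∪ ⋯ ∪ E_{r+1}`, is `-1` if `n_E + 1 ≤ j ≤ n_E + r`, and is `0` otherwise. -/
def hatM {nV nE r : ℕ} (G : SCCBipartite nV nE r) :
    Matrix (Fin (nV + r + 1)) (Fin (nE + r)) ℤ :=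
  Matrix.of fun i j =>
    if hi : (i : ℕ) < nV + r then augM G ⟨i, hi⟩ j
    else
      if hj : (j : ℕ) < nE then
        (if (G.eClass ⟨j, hj⟩).isSome then 1 else 0)
      else -1

namespace SCCTU
open Matrix


lemma mem_signRange_iff {x : ℤ} :
    x ∈ Set.range (SignType.cast : SignType → ℤ) ↔ x = 0 ∨ x = 1 ∨ x = -1 := by
  constructor
  · rintro ⟨s, rfl⟩; cases s <;> simp
  · rintro (rfl | rfl | rfl)
    exacts [⟨0, rfl⟩, ⟨1, rfl⟩, ⟨-1, by simp⟩]

/-- A `{0, ±1}` matrix for which there is a row signing `σ` such that every column has at most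
two nonzero entries which cancel under `σ` is totally unimodular. -/
lemma gh_tu {m n : Type*} [Fintype m] [DecidableEq m] (A : Matrix m n ℤ) (σ : m → ℤ)
    (hσ : ∀ i, σ i = 1 ∨ σ i = -1)
    (hentry : ∀ i j, A i j = 0 ∨ A i j = 1 ∨ A i j = -1)
    (hcol : ∀ j, ∃ i₁ i₂ : m, (∀ i, i ≠ i₁ → i ≠ i₂ → A i j = 0) ∧
      (i₁ = i₂ ∨ σ i₁ * A i₁ j + σ i₂ * A i₂ j = 0)) :
    A.IsTotallyUnimodular := by
  intro k f g hf hg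
  induction k with
  | zero => exact ⟨1, by simp⟩
  | succ k ih =>
    by_cases hcase : ∃ y : Fin (k + 1), ∃ x₀ : Fin (k + 1), ∀ x, x ≠ x₀ → A (f x) (g y) = 0
    · obtain ⟨y, x₀, h0⟩ := hcase
      have hAB := Matrix.det_succ_column (A.submatrix f g) y
      rw [Fintype.sum_eq_single x₀ (fun b hb => by
        simp [Matrix.submatrix_apply, h0 b hb])] at hAB
      rw [hAB]
      change _ ∈ MonoidHom.mrange SignType.castHom.toMonoidHom
      refine mul_mem (mul_mem ?_ ?_) ?_
      · apply pow_mem; exact ⟨-1, by simp⟩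
      · show A (f x₀) (g y) ∈ Set.range (SignType.cast : SignType → ℤ)
        rw [mem_signRange_iff]; exact hentry _ _
      · rw [Matrix.submatrix_submatrix]
        exact ih (f ∘ x₀.succAbove) (g ∘ y.succAbove)
          (hf.comp (Fin.succAbove_right_injective))
          (hg.comp (Fin.succAbove_right_injective))
    · push_neg at hcase
      -- every column of the submatrix has two distinct nonzero rows
      have hdep : ∀ y : Fin (k + 1), ∑ x, σ (f x) * A (f x) (g y) = 0 := by
        intro y
        obtain ⟨i₁, i₂, hsupp, hcan⟩ := hcol (g y)
        obtain ⟨a, _, ha⟩ := hcase y 0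
        obtain ⟨b, hba, hb⟩ := hcase y a
        have hfa : f a = i₁ ∨ f a = i₂ := by
          by_contra hc; push_neg at hc; exact ha (hsupp _ hc.1 hc.2)
        have hfb : f b = i₁ ∨ f b = i₂ := by
          by_contra hc; push_neg at hc; exact hb (hsupp _ hc.1 hc.2)
        have hne : f b ≠ f a := fun h => hba (hf h)
        have hi12 : i₁ ≠ i₂ := by
          rintro rfl
          rcases hfa with h1 | h1 <;> rcases hfb with h2 | h2 <;>
            exact hne (h2.trans h1.symm)
        have hcan' := hcan.resolve_left hi12
        have hba' : a ≠ b := fun h => hba h.symm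
        have hsum : ∑ x, σ (f x) * A (f x) (g y)
            = ∑ x ∈ ({a, b} : Finset (Fin (k+1))), σ (f x) * A (f x) (g y) := by
          refine (Finset.sum_subset (Finset.subset_univ _) ?_).symm
          intro x _ hx
          simp only [Finset.mem_insert, Finset.mem_singleton, not_or] at hx
          have h1 : f x ≠ i₁ := by
            intro h
            rcases hfa with h1 | h1
            · exact hx.1 (hf (h.trans h1.symm))
            · rcases hfb with h2 | h2
              · exact hx.2 (hf (h.trans h2.symm))
              · exact hne (h2.trans h1.symm) |>.elim
          have h2 : f x ≠ i₂ := by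
            intro h
            rcases hfa with h1 | h1
            · rcases hfb with h2 | h2
              · exact hne (h2.trans h1.symm) |>.elim
              · exact hx.2 (hf (h.trans h2.symm))
            · exact hx.1 (hf (h.trans h1.symm))
          rw [hsupp _ h1 h2, mul_zero]
        rw [hsum, Finset.sum_pair hba']
        rcases hfa with h1 | h1 <;> rcases hfb with h2 | h2
        · exact (hne (h2.trans h1.symm)).elim
        · rw [h1, h2]; linarith [hcan']
        · rw [h1, h2]; linarith [hcan']
        · exact (hne (h2.trans h1.symm)).elim
      -- a nonzero vector in the left kernel forces the determinant to vanish
      set S := A.submatrix f g with hS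
      have hv : (fun x => σ (f x)) ᵥ* S = 0 := by
        funext y
        simpa [Matrix.vecMul, dotProduct, hS] using hdep y
      have hdv : S.det * σ (f 0) = 0 := by
        have h1 : (fun x => σ (f x)) ᵥ* (S * S.adjugate) = 0 := by
          rw [← Matrix.vecMul_vecMul, hv, Matrix.zero_vecMul]
        rw [Matrix.mul_adjugate] at h1
        have h2 := congrFun h1 0
        simpa [Matrix.vecMul, dotProduct, Finset.mul_sum, Matrix.one_apply, mul_comm]
          using h2
      have hdet : S.det = 0 := by
        rcases hσ (f 0) with h | h <;> rw [h] at hdv <;> omega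
      exact ⟨0, by simp [hdet]⟩

lemma mul_pm_mem_signRange {e x : ℤ} (he : e = 1 ∨ e = -1)
    (hx : x ∈ Set.range (SignType.cast : SignType → ℤ)) :
    e * x ∈ Set.range (SignType.cast : SignType → ℤ) := by
  rw [mem_signRange_iff] at hx ⊢
  rcases he with rfl | rfl <;> rcases hx with rfl | rfl | rfl <;> norm_num

/-- Appending negations of (a selection of) rows of a TU matrix preserves TU. -/
lemma fromRows_neg_isTotallyUnimodular {m m' n : Type*} (A : Matrix m n ℤ) (φ : m' → m)
    (hA : A.IsTotallyUnimodular) :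
    (Matrix.fromRows A (-(A.submatrix φ id))).IsTotallyUnimodular := by
  rw [Matrix.isTotallyUnimodular_iff]
  intro k f g
  set f' : Fin k → m := fun x => Sum.elim id φ (f x) with hf'
  set ε : Fin k → ℤ := fun x => Sum.elim (fun _ => (1 : ℤ)) (fun _ => -1) (f x) with hε
  have hS : (Matrix.fromRows A (-(A.submatrix φ id))).submatrix f g
      = Matrix.of (fun x j => ε x * (A.submatrix f' g) x j) := by
    ext x j
    cases h : f x with
    | inl a => simp [hf', hε, h, Matrix.fromRows, Matrix.of_apply]; rfl
    | inr b => simp [hf', hε, h, Matrix.fromRows, Matrix.of_apply]; rfl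
  rw [hS, Matrix.det_mul_column]
  have hεp : (∏ x, ε x) = 1 ∨ (∏ x, ε x) = -1 := by
    rw [← Int.isUnit_iff]
    refine IsUnit.of_mul_eq_one (∏ x, ε x) ?_
    rw [← Finset.prod_mul_distrib]
    refine Finset.prod_eq_one fun x _ => ?_
    rcases h : f x with a | b <;> simp [hε, h]
  exact mul_pm_mem_signRange hεp ((Matrix.isTotallyUnimodular_iff A).mp hA k f' g)



variable {nV nE r : ℕ}

def embV (nV r : ℕ) (v : Fin nV) : Fin (nV + r + 1) := ⟨v, by have := v.isLt; omega⟩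

def rowK (nV r : ℕ) (c : ℕ) (hc : c < r) : Fin (nV + r + 1) := ⟨nV + c, by omega⟩

def rowZ (nV r : ℕ) : Fin (nV + r + 1) := ⟨nV + r, by omega⟩

@[simp] lemma embV_val (v : Fin nV) : (embV nV r v : ℕ) = v := rfl
@[simp] lemma rowK_val (c : ℕ) (hc : c < r) : (rowK nV r c hc : ℕ) = nV + c := rfl
@[simp] lemma rowZ_val : (rowZ nV r : ℕ) = nV + r := rfl

lemma embV_inj : Function.Injective (embV nV r) := fun a b h => by
  apply Fin.ext; have := congrArg (Fin.val) h; simpa using this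

lemma row_cases (i : Fin (nV + r + 1)) :
    (∃ v : Fin nV, i = embV nV r v) ∨ (∃ c, ∃ hc : c < r, i = rowK nV r c hc) ∨ i = rowZ nV r := by
  have hi := i.isLt
  by_cases h1 : (i : ℕ) < nV
  · exact Or.inl ⟨⟨i, h1⟩, Fin.ext rfl⟩
  · by_cases h2 : (i : ℕ) < nV + r
    · exact Or.inr (Or.inl ⟨(i : ℕ) - nV, by omega, Fin.ext (by simp [rowK]; omega)⟩)
    · exact Or.inr (Or.inr (Fin.ext (by simp [rowZ]; omega)))

/-- `c`-th class row selected (within row set `R`). -/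
def RK (R : Finset (Fin (nV + r + 1))) (c : ℕ) : Prop :=
  ∃ i ∈ R, (i : ℕ) = nV + c ∧ c < r

instance (R : Finset (Fin (nV + r + 1))) : DecidablePred (RK (nV := nV) (r := r) R) := by
  intro c; unfold RK; infer_instance

lemma RK_iff (R : Finset (Fin (nV + r + 1))) (c : ℕ) (hc : c < r) :
    RK R c ↔ rowK nV r c hc ∈ R := by
  constructor
  · rintro ⟨i, hiR, hival, -⟩
    have : i = rowK nV r c hc := Fin.ext (by simpa using hival)
    rwa [this] at hiR
  · intro h; exact ⟨_, h, rfl, hc⟩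

lemma not_RK_of_ge (R : Finset (Fin (nV + r + 1))) (c : ℕ) (hc : r ≤ c) : ¬ RK R c := by
  rintro ⟨i, -, -, hlt⟩; omega

/-- Row signing. -/
def sgn (G : SCCBipartite nV nE r) : Fin (nV + r + 1) → ℤ := fun i =>
  if hi : (i : ℕ) < nV then (if G.side ⟨i, hi⟩ = BipSide.XL then 1 else -1)
  else if (i : ℕ) < nV + r then 1 else -1

lemma sgn_embV (G : SCCBipartite nV nE r) (v : Fin nV) :
    sgn G (embV nV r v) = if G.side v = BipSide.XL then 1 else -1 := by
  have hv := v.isLt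
  simp [sgn, embV, hv]
  rfl

lemma sgn_rowK (G : SCCBipartite nV nE r) (c : ℕ) (hc : c < r) :
    sgn G (rowK nV r c hc) = 1 := by
  simp [sgn, rowK]; omega

lemma sgn_rowZ (G : SCCBipartite nV nE r) : sgn G (rowZ nV r) = -1 := by
  simp [sgn, rowZ]

lemma sgn_pm (G : SCCBipartite nV nE r) (i : Fin (nV + r + 1)) :
    sgn G i = 1 ∨ sgn G i = -1 := by
  unfold sgn; split_ifs <;> simp

def grade (nV r : ℕ) (i : Fin (nV + r + 1)) : ℕ :=
  if (i : ℕ) < nV then 0 else if (i : ℕ) < nV + r then 1 else 2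

/- structural lemmas for `hatM` -/

lemma hatM_embV (G : SCCBipartite nV nE r) (v : Fin nV) (j : Fin (nE + r)) :
    hatM G (embV nV r v) j =
      if hj : (j : ℕ) < nE then
        (if G.endL ⟨j, hj⟩ = v ∨ G.endR ⟨j, hj⟩ = v then 1 else 0)
      else 0 := by
  have hv := v.isLt
  have h1 : ((embV nV r v : Fin (nV + r + 1)) : ℕ) < nV + r := by simp [embV]; omega
  simp only [hatM, Matrix.of_apply, dif_pos h1, augM]
  rw [dif_pos (show ((⟨(embV nV r v : ℕ), h1⟩ : Fin (nV + r)) : ℕ) < nV from hv)]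
  congr 1

lemma hatM_rowK (G : SCCBipartite nV nE r) (c : ℕ) (hc : c < r) (hc1 : c < r + 1)
    (j : Fin (nE + r)) :
    hatM G (rowK nV r c hc) j =
      if hj : (j : ℕ) < nE then
        (if G.eClass ⟨j, hj⟩ = some ⟨c, hc1⟩ then -1 else 0)
      else (if c = (j : ℕ) - nE then 1 else 0) := by
  have h1 : ((rowK nV r c hc : Fin (nV + r + 1)) : ℕ) < nV + r := by simp [rowK]; omega
  simp only [hatM, Matrix.of_apply, dif_pos h1, augM]
  rw [dif_neg (show ¬ ((⟨(rowK nV r c hc : ℕ), h1⟩ : Fin (nV + r)) : ℕ) < nV by simp [rowK])]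
  simp only [rowK, Nat.add_sub_cancel_left]

lemma hatM_rowZ (G : SCCBipartite nV nE r) (j : Fin (nE + r)) :
    hatM G (rowZ nV r) j =
      if hj : (j : ℕ) < nE then (if (G.eClass ⟨j, hj⟩).isSome then 1 else 0)
      else -1 := by
  simp only [hatM, Matrix.of_apply]
  rw [dif_neg (by simp [rowZ])]


/-- Coefficients of the determinant-preserving row operations. -/
def Cf (G : SCCBipartite nV nE r) (R : Finset (Fin (nV + r + 1))) :
    Fin (nV + r + 1) → Fin (nV + r + 1) → ℤ := fun i i' =>
  if hi' : (i' : ℕ) < nV then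
    if G.side ⟨i', hi'⟩ = BipSide.UU then
      if (i : ℕ) < nV then 0
      else if (i : ℕ) < nV + r then
        (if ((G.group ⟨i', hi'⟩ : ℕ) = (i : ℕ) - nV) then 1 else 0)
      else (if RK R ((G.group ⟨i', hi'⟩ : ℕ)) then 0 else -1)
    else 0
  else if (i' : ℕ) < nV + r then (if (i : ℕ) = nV + r then 1 else 0)
  else 0

lemma Cf_grade (G : SCCBipartite nV nE r) (R : Finset (Fin (nV + r + 1)))
    (i i' : Fin (nV + r + 1)) (h : Cf G R i i' ≠ 0) : grade nV r i' < grade nV r i := by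
  unfold Cf at h
  unfold grade
  split_ifs at h ⊢ <;> omega

lemma Cf_vertex (G : SCCBipartite nV nE r) (R : Finset (Fin (nV + r + 1)))
    (i i' : Fin (nV + r + 1)) (hi : (i : ℕ) < nV) : Cf G R i i' = 0 := by
  unfold Cf; split_ifs <;> omega

/-- The transformed matrix (result of the row operations applied to `hatM`),
relative to a selected row set `R`. -/
def HP (G : SCCBipartite nV nE r) (R : Finset (Fin (nV + r + 1))) :
    Matrix (Fin (nV + r + 1)) (Fin (nE + r)) ℤ :=
  Matrix.of fun i j =>
    if hi : (i : ℕ) < nV then hatM G i j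
    else if (i : ℕ) < nV + r then
      if hj : (j : ℕ) < nE then
        ((G.eClass ⟨j, hj⟩).elim 0 fun cc =>
          if (cc : ℕ) = (i : ℕ) - nV then
            (if embV nV r (G.endR ⟨j, hj⟩) ∈ R then 0 else -1) else 0)
      else (if (i : ℕ) - nV = (j : ℕ) - nE then 1 else 0)
    else
      if hj : (j : ℕ) < nE then
        ((G.eClass ⟨j, hj⟩).elim 0 fun cc =>
          if RK R ((cc : ℕ)) then 0
          else (if embV nV r (G.endR ⟨j, hj⟩) ∈ R then 0 else 1))
      else (if RK R ((j : ℕ) - nE) then 0 else -1)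

lemma HP_embV (G : SCCBipartite nV nE r) (R : Finset (Fin (nV + r + 1))) (v : Fin nV)
    (j : Fin (nE + r)) : HP G R (embV nV r v) j = hatM G (embV nV r v) j := by
  have hv := v.isLt
  simp only [HP, Matrix.of_apply]
  rw [dif_pos (show ((embV nV r v : Fin (nV+r+1)) : ℕ) < nV from hv)]

lemma HP_rowK (G : SCCBipartite nV nE r) (R : Finset (Fin (nV + r + 1))) (c : ℕ) (hc : c < r)
    (j : Fin (nE + r)) :
    HP G R (rowK nV r c hc) j =
      if hj : (j : ℕ) < nE then
        ((G.eClass ⟨j, hj⟩).elim 0 fun cc =>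
          if (cc : ℕ) = c then
            (if embV nV r (G.endR ⟨j, hj⟩) ∈ R then 0 else -1) else 0)
      else (if c = (j : ℕ) - nE then 1 else 0) := by
  simp only [HP, Matrix.of_apply]
  rw [dif_neg (by simp [rowK]), if_pos (by simp [rowK]; omega)]
  simp only [rowK_val, Nat.add_sub_cancel_left]

lemma HP_rowZ (G : SCCBipartite nV nE r) (R : Finset (Fin (nV + r + 1))) (j : Fin (nE + r)) :
    HP G R (rowZ nV r) j =
      if hj : (j : ℕ) < nE then
        ((G.eClass ⟨j, hj⟩).elim 0 fun cc =>
          if RK R ((cc : ℕ)) then 0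
          else (if embV nV r (G.endR ⟨j, hj⟩) ∈ R then 0 else 1))
      else (if RK R ((j : ℕ) - nE) then 0 else -1) := by
  simp only [HP, Matrix.of_apply]
  rw [dif_neg (by simp [rowZ]), if_neg (by simp [rowZ])]

lemma HP_entry (G : SCCBipartite nV nE r) (R : Finset (Fin (nV + r + 1)))
    (i : Fin (nV + r + 1)) (j : Fin (nE + r)) :
    HP G R i j = 0 ∨ HP G R i j = 1 ∨ HP G R i j = -1 := by
  rcases row_cases i with ⟨v, rfl⟩ | ⟨c, hc, rfl⟩ | rfl
  · rw [HP_embV, hatM_embV]; split_ifs <;> tauto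
  · rw [HP_rowK G R c hc]
    by_cases hj : (j : ℕ) < nE
    · rw [dif_pos hj]
      rcases hcc : G.eClass ⟨j, hj⟩ with _ | cc
      · simp
      · simp only [Option.elim_some]; split_ifs <;> tauto
    · rw [dif_neg hj]; split_ifs <;> tauto
  · rw [HP_rowZ]
    by_cases hj : (j : ℕ) < nE
    · rw [dif_pos hj]
      rcases hcc : G.eClass ⟨j, hj⟩ with _ | cc
      · simp
      · simp only [Option.elim_some]; split_ifs <;> tauto
    · rw [dif_neg hj]; split_ifs <;> tauto

/- distinctness of row indices -/
lemma embV_ne_rowK (v : Fin nV) (c : ℕ) (hc : c < r) : embV nV r v ≠ rowK nV r c hc := by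
  intro h; have := congrArg Fin.val h; simp [embV, rowK] at this; omega

lemma embV_ne_rowZ (v : Fin nV) : embV nV r v ≠ rowZ nV r := by
  intro h; have := congrArg Fin.val h; simp [embV, rowZ] at this; omega

lemma rowK_ne_rowZ (c : ℕ) (hc : c < r) : rowK nV r c hc ≠ rowZ nV r := by
  intro h; have := congrArg Fin.val h; simp [rowK, rowZ] at this; omega

lemma rowK_eq_iff (c c' : ℕ) (hc : c < r) (hc' : c' < r) :
    rowK nV r c hc = rowK nV r c' hc' ↔ c = c' := by
  constructor
  · intro h; have := congrArg Fin.val h; simp [rowK] at this; omega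
  · rintro rfl; rfl

/- `Cf` mini-lemmas -/
lemma Cf_rowK_embV (G : SCCBipartite nV nE r) (R : Finset (Fin (nV + r + 1)))
    (c : ℕ) (hc : c < r) (u : Fin nV) :
    Cf G R (rowK nV r c hc) (embV nV r u) =
      if G.side u = BipSide.UU ∧ (G.group u : ℕ) = c then 1 else 0 := by
  have hu := u.isLt
  have e1 : ¬ (((rowK nV r c hc : Fin (nV + r + 1)) : ℕ) < nV) := by simp only [rowK_val]; omega
  have e2 : ((rowK nV r c hc : Fin (nV + r + 1)) : ℕ) < nV + r := by simp only [rowK_val]; omega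
  have e3 : ((rowK nV r c hc : Fin (nV + r + 1)) : ℕ) - nV = c := by simp only [rowK_val]; omega
  unfold Cf
  rw [dif_pos (show ((embV nV r u : Fin (nV + r + 1)) : ℕ) < nV from hu), if_neg e1,
    if_pos e2, e3]
  simp only [embV_val, Fin.eta]
  split_ifs <;> simp_all <;> rfl

lemma Cf_rowZ_embV (G : SCCBipartite nV nE r) (R : Finset (Fin (nV + r + 1))) (u : Fin nV) :
    Cf G R (rowZ nV r) (embV nV r u) =
      if G.side u = BipSide.UU then (if RK R ((G.group u : ℕ)) then 0 else -1) else 0 := by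
  have hu := u.isLt
  have e1 : ¬ (((rowZ nV r : Fin (nV + r + 1)) : ℕ) < nV) := by simp only [rowZ_val]; omega
  have e2 : ¬ (((rowZ nV r : Fin (nV + r + 1)) : ℕ) < nV + r) := by simp only [rowZ_val]; omega
  unfold Cf
  rw [dif_pos (show ((embV nV r u : Fin (nV + r + 1)) : ℕ) < nV from hu), if_neg e1, if_neg e2]
  simp only [embV_val, Fin.eta]
  rfl

lemma Cf_rowZ_rowK (G : SCCBipartite nV nE r) (R : Finset (Fin (nV + r + 1)))
    (c : ℕ) (hc : c < r) : Cf G R (rowZ nV r) (rowK nV r c hc) = 1 := by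
  have e1 : ¬ (((rowK nV r c hc : Fin (nV + r + 1)) : ℕ) < nV) := by simp only [rowK_val]; omega
  have e2 : ((rowK nV r c hc : Fin (nV + r + 1)) : ℕ) < nV + r := by simp only [rowK_val]; omega
  have e3 : ((rowZ nV r : Fin (nV + r + 1)) : ℕ) = nV + r := rfl
  unfold Cf
  rw [dif_neg e1, if_pos e2, if_pos e3]

lemma Cf_rowZ_rowZ (G : SCCBipartite nV nE r) (R : Finset (Fin (nV + r + 1))) :
    Cf G R (rowZ nV r) (rowZ nV r) = 0 := by
  have e1 : ¬ (((rowZ nV r : Fin (nV + r + 1)) : ℕ) < nV) := by simp only [rowZ_val]; omega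
  have e2 : ¬ (((rowZ nV r : Fin (nV + r + 1)) : ℕ) < nV + r) := by simp only [rowZ_val]; omega
  unfold Cf
  rw [dif_neg e1, if_neg e2]

lemma Cf_nonvertex (G : SCCBipartite nV nE r) (R : Finset (Fin (nV + r + 1)))
    (i i' : Fin (nV + r + 1)) (hi : (i : ℕ) ≠ nV + r) (hi' : nV ≤ (i' : ℕ)) :
    Cf G R i i' = 0 := by
  unfold Cf; split_ifs <;> omega


lemma some_mk_eq_iff {cc : Fin (r + 1)} {c : ℕ} {hc1 : c < r + 1} :
    (some cc = some (⟨c, hc1⟩ : Fin (r + 1))) ↔ (cc : ℕ) = c := by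
  simp [Fin.ext_iff]

/-- The key pointwise identity: applying the row operations encoded by `Cf` to `hatM`
yields `HP`. -/
lemma key (G : SCCBipartite nV nE r) {k : ℕ} (f : Fin k → Fin (nV + r + 1))
    (hf : Function.Injective f) (i : Fin (nV + r + 1)) (j : Fin (nE + r)) :
    hatM G i j + ∑ y : Fin k, Cf G (Finset.image f Finset.univ) i (f y) * hatM G (f y) j
      = HP G (Finset.image f Finset.univ) i j := by
  set R := Finset.image f Finset.univ with hR
  have hsum : ∀ i : Fin (nV + r + 1),
      (∑ y : Fin k, Cf G R i (f y) * hatM G (f y) j)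
        = ∑ i' ∈ R, Cf G R i i' * hatM G i' j := by
    intro i
    rw [hR, Finset.sum_image (fun x _ y _ h => hf h)]
  rw [hsum]
  rcases row_cases i with ⟨v, rfl⟩ | ⟨c, hc, rfl⟩ | rfl
  · -- vertex row: no row operations
    have h0 : ∀ i' ∈ R, Cf G R (embV nV r v) i' * hatM G i' j = 0 := by
      intro i' _
      rw [Cf_vertex G R _ i' v.isLt, zero_mul]
    rw [Finset.sum_congr rfl h0, Finset.sum_const_zero, add_zero, HP_embV]
  · -- class row c
    by_cases hj : (j : ℕ) < nE
    · rcases hcc : G.eClass ⟨j, hj⟩ with _ | cc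
      · -- E_XX edge: everything vanishes
        have h0 : ∀ i' ∈ R, Cf G R (rowK nV r c hc) i' * hatM G i' j = 0 := by
          intro i' _
          rcases row_cases i' with ⟨u, rfl⟩ | ⟨c', hc', rfl⟩ | rfl
          · rw [Cf_rowK_embV]
            split_ifs with h
            · rw [one_mul, hatM_embV, dif_pos hj, if_neg]
              rintro (h1 | h1)
              · have := G.endL_XL ⟨j, hj⟩; rw [h1] at this; rw [this] at h; exact absurd h.1 (by simp)
              · have := G.eXX_mem ⟨j, hj⟩ hcc; rw [h1] at this; rw [this] at h; exact absurd h.1 (by simp)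
            · rw [zero_mul]
          · rw [Cf_nonvertex G R _ _ (by simp [rowK]; omega) (by simp [rowK]), zero_mul]
          · rw [Cf_nonvertex G R _ _ (by simp [rowK]; omega) (by simp [rowZ]), zero_mul]
        rw [Finset.sum_congr rfl h0, Finset.sum_const_zero, add_zero,
          hatM_rowK G c hc (by omega), HP_rowK G R c hc, dif_pos hj, dif_pos hj, hcc]
        simp
      · by_cases hceq : (cc : ℕ) = c
        · -- class-c edge: support is the `endR` row
          have hsideR := (G.eI_mem ⟨j, hj⟩ cc hcc).1
          have hgroupR := (G.eI_mem ⟨j, hj⟩ cc hcc).2.2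
          have hF : ∀ i', Cf G R (rowK nV r c hc) i' * hatM G i' j
              = if i' = embV nV r (G.endR ⟨j, hj⟩) then 1 else 0 := by
            intro i'
            rcases row_cases i' with ⟨u, rfl⟩ | ⟨c', hc', rfl⟩ | rfl
            · rw [Cf_rowK_embV]
              by_cases hu : u = G.endR ⟨j, hj⟩
              · subst hu
                rw [if_pos ⟨hsideR, by rw [hgroupR] at *; exact hceq⟩, one_mul,
                  hatM_embV, dif_pos hj, if_pos (Or.inr rfl), if_pos rfl]
              · rw [if_neg (fun h => hu (embV_inj h))]
                split_ifs with h
                · rw [one_mul, hatM_embV, dif_pos hj, if_neg]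
                  rintro (h1 | h1)
                  · have := G.endL_XL ⟨j, hj⟩; rw [h1] at this; rw [this] at h
                    exact absurd h.1 (by simp)
                  · exact hu h1.symm
                · rw [zero_mul]
            · rw [Cf_nonvertex G R _ _ (by simp [rowK]; omega) (by simp [rowK]), zero_mul,
                if_neg (fun h => embV_ne_rowK _ _ _ h.symm)]
            · rw [Cf_nonvertex G R _ _ (by simp [rowK]; omega) (by simp [rowZ]), zero_mul,
                if_neg (fun h => embV_ne_rowZ _ h.symm)]
          rw [Finset.sum_congr rfl (fun i' _ => hF i'),
            Finset.sum_ite_eq' R (embV nV r (G.endR ⟨j, hj⟩)) (fun _ => (1 : ℤ)),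
            hatM_rowK G c hc (by omega), HP_rowK G R c hc, dif_pos hj, dif_pos hj, hcc,
            if_pos (some_mk_eq_iff.mpr hceq)]
          simp only [Option.elim_some, if_pos hceq]
          split_ifs <;> ring
        · -- edge of a different class
          have h0 : ∀ i' ∈ R, Cf G R (rowK nV r c hc) i' * hatM G i' j = 0 := by
            intro i' _
            rcases row_cases i' with ⟨u, rfl⟩ | ⟨c', hc', rfl⟩ | rfl
            · rw [Cf_rowK_embV]
              split_ifs with h
              · rw [one_mul, hatM_embV, dif_pos hj, if_neg]
                rintro (h1 | h1)
                · have := G.endL_XL ⟨j, hj⟩; rw [h1] at this; rw [this] at h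
                  exact absurd h.1 (by simp)
                · have := (G.eI_mem ⟨j, hj⟩ cc hcc).2.2; rw [h1] at this
                  rw [this] at h; exact hceq h.2
              · rw [zero_mul]
            · rw [Cf_nonvertex G R _ _ (by simp [rowK]; omega) (by simp [rowK]), zero_mul]
            · rw [Cf_nonvertex G R _ _ (by simp [rowK]; omega) (by simp [rowZ]), zero_mul]
          rw [Finset.sum_congr rfl h0, Finset.sum_const_zero, add_zero,
            hatM_rowK G c hc (by omega), HP_rowK G R c hc, dif_pos hj, dif_pos hj, hcc,
            if_neg (fun h => hceq (some_mk_eq_iff.mp h))]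
          simp only [Option.elim_some, if_neg hceq]
    · -- slack column
      have h0 : ∀ i' ∈ R, Cf G R (rowK nV r c hc) i' * hatM G i' j = 0 := by
        intro i' _
        rcases row_cases i' with ⟨u, rfl⟩ | ⟨c', hc', rfl⟩ | rfl
        · rw [hatM_embV, dif_neg hj, mul_zero]
        · rw [Cf_nonvertex G R _ _ (by simp [rowK]; omega) (by simp [rowK]), zero_mul]
        · rw [Cf_nonvertex G R _ _ (by simp [rowK]; omega) (by simp [rowZ]), zero_mul]
      rw [Finset.sum_congr rfl h0, Finset.sum_const_zero, add_zero,
        hatM_rowK G c hc (by omega), HP_rowK G R c hc, dif_neg hj, dif_neg hj]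
  · -- the extra row Z
    by_cases hj : (j : ℕ) < nE
    · rcases hcc : G.eClass ⟨j, hj⟩ with _ | cc
      · -- E_XX edge
        have h0 : ∀ i' ∈ R, Cf G R (rowZ nV r) i' * hatM G i' j = 0 := by
          intro i' _
          rcases row_cases i' with ⟨u, rfl⟩ | ⟨c', hc', rfl⟩ | rfl
          · rw [Cf_rowZ_embV]
            split_ifs with h h2
            · rw [zero_mul]
            · rw [hatM_embV, dif_pos hj, if_neg, mul_zero]
              rintro (h1 | h1)
              · have := G.endL_XL ⟨j, hj⟩; rw [h1] at this; rw [this] at h; simp at h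
              · have := G.eXX_mem ⟨j, hj⟩ hcc; rw [h1] at this; rw [this] at h; simp at h
            · rw [zero_mul]
          · rw [Cf_rowZ_rowK, one_mul, hatM_rowK G c' hc' (by omega), dif_pos hj, hcc,
              if_neg (by simp)]
          · rw [Cf_rowZ_rowZ, zero_mul]
        rw [Finset.sum_congr rfl h0, Finset.sum_const_zero, add_zero,
          hatM_rowZ, HP_rowZ, dif_pos hj, dif_pos hj, hcc]
        simp
      · by_cases hRK : RK R ((cc : ℕ))
        · have hccr : (cc : ℕ) < r := by obtain ⟨i0, -, -, h⟩ := hRK; exact h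
          have hsideR := (G.eI_mem ⟨j, hj⟩ cc hcc).1
          have hgroupR := (G.eI_mem ⟨j, hj⟩ cc hcc).2.2
          have hF : ∀ i', Cf G R (rowZ nV r) i' * hatM G i' j
              = if i' = rowK nV r ((cc : ℕ)) hccr then -1 else 0 := by
            intro i'
            rcases row_cases i' with ⟨u, rfl⟩ | ⟨c', hc', rfl⟩ | rfl
            · rw [if_neg (embV_ne_rowK _ _ _), Cf_rowZ_embV]
              split_ifs with h h2
              · rw [zero_mul]
              · rw [hatM_embV, dif_pos hj, if_neg, mul_zero]
                rintro (h1 | h1)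
                · have := G.endL_XL ⟨j, hj⟩; rw [h1] at this; rw [this] at h; simp at h
                · have hgu : G.group u = cc := by rw [← h1]; exact hgroupR
                  exact h2 (by rw [hgu]; exact hRK)
              · rw [zero_mul]
            · rw [Cf_rowZ_rowK, one_mul, hatM_rowK G c' hc' (by omega), dif_pos hj, hcc]
              by_cases hcceq : (cc : ℕ) = c'
              · rw [if_pos (some_mk_eq_iff.mpr hcceq), if_pos ((rowK_eq_iff _ _ _ _).2 hcceq.symm)]
              · rw [if_neg (fun h => hcceq (some_mk_eq_iff.mp h)),
                  if_neg (fun h => hcceq ((rowK_eq_iff _ _ _ _).1 h).symm)]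
            · rw [Cf_rowZ_rowZ, zero_mul, if_neg (fun h => rowK_ne_rowZ _ _ h.symm)]
          rw [Finset.sum_congr rfl (fun i' _ => hF i'),
            Finset.sum_ite_eq' R (rowK nV r ((cc : ℕ)) hccr) (fun _ => (-1 : ℤ)),
            if_pos ((RK_iff R _ hccr).1 hRK), hatM_rowZ, HP_rowZ, dif_pos hj, dif_pos hj, hcc]
          simp [hRK]
        · have hsideR := (G.eI_mem ⟨j, hj⟩ cc hcc).1
          have hgroupR := (G.eI_mem ⟨j, hj⟩ cc hcc).2.2
          have hF : ∀ i' ∈ R, Cf G R (rowZ nV r) i' * hatM G i' j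
              = if i' = embV nV r (G.endR ⟨j, hj⟩) then -1 else 0 := by
            intro i' hiR
            rcases row_cases i' with ⟨u, rfl⟩ | ⟨c', hc', rfl⟩ | rfl
            · rw [Cf_rowZ_embV]
              by_cases hu : u = G.endR ⟨j, hj⟩
              · subst hu
                rw [if_pos hsideR, if_neg (hgroupR ▸ hRK), hatM_embV, dif_pos hj,
                  if_pos (Or.inr rfl), if_pos rfl]
                ring
              · rw [if_neg (fun h => hu (embV_inj h))]
                split_ifs with h h2
                · rw [zero_mul]
                · rw [hatM_embV, dif_pos hj, if_neg, mul_zero]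
                  rintro (h1 | h1)
                  · have := G.endL_XL ⟨j, hj⟩; rw [h1] at this; rw [this] at h; simp at h
                  · exact hu h1.symm
                · rw [zero_mul]
            · rw [if_neg (fun h => embV_ne_rowK _ _ _ h.symm), Cf_rowZ_rowK, one_mul,
                hatM_rowK G c' hc' (by omega), dif_pos hj, hcc, if_neg]
              intro h
              have hcceq : (cc : ℕ) = c' := some_mk_eq_iff.mp h
              exact hRK (hcceq ▸ (RK_iff R c' hc').2 hiR)
            · rw [Cf_rowZ_rowZ, zero_mul, if_neg (fun h => embV_ne_rowZ _ h.symm)]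
          rw [Finset.sum_congr rfl hF,
            Finset.sum_ite_eq' R (embV nV r (G.endR ⟨j, hj⟩)) (fun _ => (-1 : ℤ)),
            hatM_rowZ, HP_rowZ, dif_pos hj, dif_pos hj, hcc]
          simp only [Option.elim_some, if_neg hRK, Option.isSome_some, if_true]
          split_ifs <;> ring
    · -- slack column
      have ht : (j : ℕ) - nE < r := by have := j.isLt; omega
      have hF : ∀ i', Cf G R (rowZ nV r) i' * hatM G i' j
          = if i' = rowK nV r ((j : ℕ) - nE) ht then 1 else 0 := by
        intro i'
        rcases row_cases i' with ⟨u, rfl⟩ | ⟨c', hc', rfl⟩ | rfl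
        · rw [hatM_embV, dif_neg hj, mul_zero, if_neg (embV_ne_rowK _ _ _)]
        · rw [Cf_rowZ_rowK, one_mul, hatM_rowK G c' hc' (by omega), dif_neg hj]
          by_cases hceq : c' = (j : ℕ) - nE
          · rw [if_pos hceq, if_pos ((rowK_eq_iff _ _ _ _).2 hceq)]
          · rw [if_neg hceq, if_neg (fun h => hceq ((rowK_eq_iff _ _ _ _).1 h))]
        · rw [Cf_rowZ_rowZ, zero_mul, if_neg (fun h => rowK_ne_rowZ _ _ h.symm)]
      rw [Finset.sum_congr rfl (fun i' _ => hF i'),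
        Finset.sum_ite_eq' R (rowK nV r ((j : ℕ) - nE) ht) (fun _ => (1 : ℤ)),
        hatM_rowZ, HP_rowZ, dif_neg hj, dif_neg hj]
      by_cases hRK : RK R ((j : ℕ) - nE)
      · rw [if_pos ((RK_iff R _ ht).1 hRK), if_pos hRK]; ring
      · rw [if_neg (fun h => hRK ((RK_iff R _ ht).2 h)), if_neg hRK]; ring


lemma grade_le (i : Fin (nV + r + 1)) : grade nV r i ≤ 2 := by
  unfold grade; split_ifs <;> omega

lemma build_pair {k : ℕ} {α : Type*} {f : Fin k → α} (hf : Function.Injective f)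
    (x₀ : Fin k) (σa F : α → ℤ) (i₁ i₂ : α)
    (h0 : ∀ x : Fin k, f x ≠ i₁ → f x ≠ i₂ → F (f x) = 0)
    (hcan : i₁ = i₂ ∨ σa i₁ * F i₁ + σa i₂ * F i₂ = 0) :
    ∃ x₁ x₂ : Fin k, (∀ x, x ≠ x₁ → x ≠ x₂ → F (f x) = 0) ∧
      (x₁ = x₂ ∨ σa (f x₁) * F (f x₁) + σa (f x₂) * F (f x₂) = 0) := by
  by_cases h1 : ∃ x, f x = i₁
  · obtain ⟨x₁, hx₁⟩ := h1
    by_cases h2 : ∃ x, f x = i₂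
    · obtain ⟨x₂, hx₂⟩ := h2
      rcases hcan with he | hc
      · exact ⟨x₁, x₁, fun x hx _ => h0 x (fun h => hx (hf (h.trans hx₁.symm)))
          (fun h => hx (hf ((h.trans he.symm).trans hx₁.symm))), Or.inl rfl⟩
      · exact ⟨x₁, x₂, fun x hxa hxb => h0 x (fun h => hxa (hf (h.trans hx₁.symm)))
          (fun h => hxb (hf (h.trans hx₂.symm))), Or.inr (by rw [hx₁, hx₂]; exact hc)⟩
    · exact ⟨x₁, x₁, fun x hx _ => h0 x (fun h => hx (hf (h.trans hx₁.symm)))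
        (fun h => h2 ⟨x, h⟩), Or.inl rfl⟩
  · by_cases h2 : ∃ x, f x = i₂
    · obtain ⟨x₂, hx₂⟩ := h2
      exact ⟨x₂, x₂, fun x hx _ => h0 x (fun h => h1 ⟨x, h⟩)
        (fun h => hx (hf (h.trans hx₂.symm))), Or.inl rfl⟩
    · exact ⟨x₀, x₀, fun x _ _ => h0 x (fun h => h1 ⟨x, h⟩) (fun h => h2 ⟨x, h⟩), Or.inl rfl⟩

lemma hatM_isTotallyUnimodular (G : SCCBipartite nV nE r) :
    (hatM G).IsTotallyUnimodular := by
  intro k f g hf hg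
  set R := Finset.image f Finset.univ with hR
  have hmem : ∀ x : Fin k, f x ∈ R := fun x => Finset.mem_image_of_mem f (Finset.mem_univ x)
  set S := (hatM G).submatrix f g with hS
  set N : Matrix (Fin k) (Fin k) ℤ := Matrix.of (fun x y => Cf G R (f x) (f y)) with hN
  set T : Matrix (Fin k) (Fin k) ℤ := Matrix.of (fun x y => HP G R (f x) (g y)) with hT
  have hfac : (1 + N) * S = T := by
    ext x y
    rw [Matrix.add_mul, Matrix.one_mul]
    show S x y + ∑ y' : Fin k, N x y' * S y' y = T x y
    exact key G f hf (f x) (g y)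
  have hNg : ∀ x y, N x y ≠ 0 → grade nV r (f y) < grade nV r (f x) :=
    fun x y h => Cf_grade G R (f x) (f y) h
  have hN2 : ∀ x z, (N * N) x z ≠ 0 → grade nV r (f z) + 2 ≤ grade nV r (f x) := by
    intro x z h
    rw [Matrix.mul_apply] at h
    obtain ⟨a, -, ha⟩ := Finset.exists_ne_zero_of_sum_ne_zero h
    rcases mul_ne_zero_iff.mp ha with ⟨h1, h2⟩
    have := hNg x a h1; have := hNg a z h2; omega
  have hN3 : N * (N * N) = 0 := by
    ext x z
    rw [Matrix.mul_apply]
    refine Finset.sum_eq_zero fun a _ => ?_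
    by_cases h1 : N x a = 0
    · rw [h1, zero_mul]
    by_cases h2 : (N * N) a z = 0
    · rw [h2, mul_zero]
    · have := hNg x a h1
      have := hN2 a z h2
      have := grade_le (nV := nV) (r := r) (f x)
      omega
  have hunit : (1 + N) * (1 - N + N * N) = 1 := by
    have hexp : (1 + N) * (1 - N + N * N) = 1 + N * (N * N) := by noncomm_ring
    rw [hexp, hN3, add_zero]
  have hdet1 : (1 + N).det * (1 - N + N * N).det = 1 := by
    rw [← Matrix.det_mul, hunit, Matrix.det_one]
  have hd : (1 + N).det = 1 ∨ (1 + N).det = -1 :=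
    Int.isUnit_iff.mp (IsUnit.of_mul_eq_one _ hdet1)
  have hdT : T.det = (1 + N).det * S.det := by rw [← hfac, Matrix.det_mul]
  have hTU : T.IsTotallyUnimodular := by
    apply gh_tu T (fun x => sgn G (f x)) (fun x => sgn_pm G (f x))
      (fun x y => HP_entry G R (f x) (g y))
    intro y
    by_cases hj : ((g y : Fin (nE + r)) : ℕ) < nE
    · rcases hcc : G.eClass ⟨(g y : ℕ), hj⟩ with _ | cc
      · -- E_XX column
        refine build_pair hf y (sgn G) (fun i => HP G R i (g y))
          (embV nV r (G.endL ⟨(g y : ℕ), hj⟩)) (embV nV r (G.endR ⟨(g y : ℕ), hj⟩))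
          ?_ (Or.inr ?_)
        · intro x hxL hxR
          beta_reduce
          rcases row_cases (f x) with ⟨u, hu⟩ | ⟨c', hc', hK⟩ | hZ
          · rw [hu, HP_embV, hatM_embV, dif_pos hj, if_neg]
            rintro (h1 | h1)
            · exact hxL (by rw [hu, ← h1])
            · exact hxR (by rw [hu, ← h1])
          · rw [hK, HP_rowK G R c' hc', dif_pos hj, hcc]
            rfl
          · rw [hZ, HP_rowZ, dif_pos hj, hcc]
            rfl
        · have hL : HP G R (embV nV r (G.endL ⟨(g y : ℕ), hj⟩)) (g y) = 1 := by
            rw [HP_embV, hatM_embV, dif_pos hj, if_pos (Or.inl rfl)]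
          have hR1 : HP G R (embV nV r (G.endR ⟨(g y : ℕ), hj⟩)) (g y) = 1 := by
            rw [HP_embV, hatM_embV, dif_pos hj, if_pos (Or.inr rfl)]
          have hsL : sgn G (embV nV r (G.endL ⟨(g y : ℕ), hj⟩)) = 1 := by
            rw [sgn_embV, if_pos (G.endL_XL _)]
          have hsR : sgn G (embV nV r (G.endR ⟨(g y : ℕ), hj⟩)) = -1 := by
            rw [sgn_embV, if_neg (by simp [G.eXX_mem ⟨(g y : ℕ), hj⟩ hcc])]
          beta_reduce
          rw [hL, hR1, hsL, hsR]; ring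
      · -- class edge column
        have hsideR := (G.eI_mem ⟨(g y : ℕ), hj⟩ cc hcc).1
        have hgroupR := (G.eI_mem ⟨(g y : ℕ), hj⟩ cc hcc).2.2
        by_cases hu : embV nV r (G.endR ⟨(g y : ℕ), hj⟩) ∈ R
        · refine build_pair hf y (sgn G) (fun i => HP G R i (g y))
            (embV nV r (G.endL ⟨(g y : ℕ), hj⟩)) (embV nV r (G.endR ⟨(g y : ℕ), hj⟩))
            ?_ (Or.inr ?_)
          · intro x hxL hxR
            beta_reduce
            rcases row_cases (f x) with ⟨u, hu'⟩ | ⟨c', hc', hK⟩ | hZ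
            · rw [hu', HP_embV, hatM_embV, dif_pos hj, if_neg]
              rintro (h1 | h1)
              · exact hxL (by rw [hu', ← h1])
              · exact hxR (by rw [hu', ← h1])
            · rw [hK, HP_rowK G R c' hc', dif_pos hj, hcc]
              simp only [Option.elim_some, if_pos hu]
              split_ifs <;> rfl
            · rw [hZ, HP_rowZ, dif_pos hj, hcc]
              simp only [Option.elim_some, if_pos hu]
              split_ifs <;> rfl
          · have hL : HP G R (embV nV r (G.endL ⟨(g y : ℕ), hj⟩)) (g y) = 1 := by
              rw [HP_embV, hatM_embV, dif_pos hj, if_pos (Or.inl rfl)]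
            have hR1 : HP G R (embV nV r (G.endR ⟨(g y : ℕ), hj⟩)) (g y) = 1 := by
              rw [HP_embV, hatM_embV, dif_pos hj, if_pos (Or.inr rfl)]
            have hsL : sgn G (embV nV r (G.endL ⟨(g y : ℕ), hj⟩)) = 1 := by
              rw [sgn_embV, if_pos (G.endL_XL _)]
            have hsR : sgn G (embV nV r (G.endR ⟨(g y : ℕ), hj⟩)) = -1 := by
              rw [sgn_embV, if_neg (by simp [hsideR])]
            beta_reduce
            rw [hL, hR1, hsL, hsR]; ring
        · by_cases hRK : RK R ((cc : ℕ))
          · have hccr : (cc : ℕ) < r := by obtain ⟨i0, -, -, h⟩ := hRK; exact h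
            refine build_pair hf y (sgn G) (fun i => HP G R i (g y))
              (embV nV r (G.endL ⟨(g y : ℕ), hj⟩)) (rowK nV r ((cc : ℕ)) hccr)
              ?_ (Or.inr ?_)
            · intro x hxL hxK
              beta_reduce
              rcases row_cases (f x) with ⟨u, hu'⟩ | ⟨c', hc', hK⟩ | hZ
              · rw [hu', HP_embV, hatM_embV, dif_pos hj, if_neg]
                rintro (h1 | h1)
                · exact hxL (by rw [hu', ← h1])
                · exact hu (by rw [h1, ← hu']; exact hmem x)
              · rw [hK, HP_rowK G R c' hc', dif_pos hj, hcc]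
                simp only [Option.elim_some]
                rw [if_neg]
                intro heq
                exact hxK (by rw [hK]; exact (rowK_eq_iff _ _ _ _).2 heq.symm)
              · rw [hZ, HP_rowZ, dif_pos hj, hcc]
                simp only [Option.elim_some, if_pos hRK]
            · have hL : HP G R (embV nV r (G.endL ⟨(g y : ℕ), hj⟩)) (g y) = 1 := by
                rw [HP_embV, hatM_embV, dif_pos hj, if_pos (Or.inl rfl)]
              have hK1 : HP G R (rowK nV r ((cc : ℕ)) hccr) (g y) = -1 := by
                rw [HP_rowK, dif_pos hj, hcc]
                simp [hu]
              have hsL : sgn G (embV nV r (G.endL ⟨(g y : ℕ), hj⟩)) = 1 := by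
                rw [sgn_embV, if_pos (G.endL_XL _)]
              beta_reduce
              rw [hL, hK1, hsL, sgn_rowK]; ring
          · refine build_pair hf y (sgn G) (fun i => HP G R i (g y))
              (embV nV r (G.endL ⟨(g y : ℕ), hj⟩)) (rowZ nV r)
              ?_ (Or.inr ?_)
            · intro x hxL hxZ
              beta_reduce
              rcases row_cases (f x) with ⟨u, hu'⟩ | ⟨c', hc', hK⟩ | hZ
              · rw [hu', HP_embV, hatM_embV, dif_pos hj, if_neg]
                rintro (h1 | h1)
                · exact hxL (by rw [hu', ← h1])
                · exact hu (by rw [h1, ← hu']; exact hmem x)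
              · rw [hK, HP_rowK G R c' hc', dif_pos hj, hcc]
                simp only [Option.elim_some]
                rw [if_neg]
                intro heq
                refine hRK ?_
                rw [heq]
                exact (RK_iff R c' hc').2 (by rw [← hK]; exact hmem x)
              · exact absurd hZ hxZ
            · have hL : HP G R (embV nV r (G.endL ⟨(g y : ℕ), hj⟩)) (g y) = 1 := by
                rw [HP_embV, hatM_embV, dif_pos hj, if_pos (Or.inl rfl)]
              have hZ1 : HP G R (rowZ nV r) (g y) = 1 := by
                rw [HP_rowZ, dif_pos hj, hcc]
                simp only [Option.elim_some, if_neg hRK, if_neg hu]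
              have hsL : sgn G (embV nV r (G.endL ⟨(g y : ℕ), hj⟩)) = 1 := by
                rw [sgn_embV, if_pos (G.endL_XL _)]
              beta_reduce
              rw [hL, hZ1, hsL, sgn_rowZ]; ring
    · -- slack column
      have ht : ((g y : Fin (nE + r)) : ℕ) - nE < r := by have := (g y).isLt; omega
      by_cases hRK : RK R (((g y : Fin (nE + r)) : ℕ) - nE)
      · refine build_pair hf y (sgn G) (fun i => HP G R i (g y))
          (rowK nV r (((g y : Fin (nE + r)) : ℕ) - nE) ht)
          (rowK nV r (((g y : Fin (nE + r)) : ℕ) - nE) ht) ?_ (Or.inl rfl)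
        intro x hx _
        beta_reduce
        rcases row_cases (f x) with ⟨u, hu'⟩ | ⟨c', hc', hK⟩ | hZ
        · rw [hu', HP_embV, hatM_embV, dif_neg hj]
        · rw [hK, HP_rowK G R c' hc', dif_neg hj, if_neg]
          intro heq
          exact hx (by rw [hK]; exact (rowK_eq_iff _ _ _ _).2 heq)
        · rw [hZ, HP_rowZ, dif_neg hj, if_pos hRK]
      · refine build_pair hf y (sgn G) (fun i => HP G R i (g y))
          (rowZ nV r) (rowZ nV r) ?_ (Or.inl rfl)
        intro x hx _
        beta_reduce
        rcases row_cases (f x) with ⟨u, hu'⟩ | ⟨c', hc', hK⟩ | hZ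
        · rw [hu', HP_embV, hatM_embV, dif_neg hj]
        · rw [hK, HP_rowK G R c' hc', dif_neg hj, if_neg]
          intro heq
          refine hRK ?_
          rw [← heq]
          exact (RK_iff R c' hc').2 (by rw [← hK]; exact hmem x)
        · exact absurd hZ hx
  have hTdet : T.det ∈ Set.range (SignType.cast : SignType → ℤ) := by
    have h := hTU k id id Function.injective_id Function.injective_id
    rwa [Matrix.submatrix_id_id] at h
  have hSdet : S.det = (1 + N).det * T.det := by
    rcases hd with h | h
    · rw [h, one_mul] at hdT; rw [h, one_mul, hdT]
    · rw [h] at hdT; rw [h]; linarith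
  rw [hSdet]
  exact mul_pm_mem_signRange hd hTdet

end SCCTU

/-- Stacking `Ĥ`, `-Ĥ_{X_L}` (the rows of `Ĥ` indexed by the vertices of `X_L`, negated), and
the identity matrix `I_{n_E + r}` yields a totally unimodular matrix. -/
theorem stacked_hatM_isTotallyUnimodular {nV nE r : ℕ} (G : SCCBipartite nV nE r) :
    (Matrix.fromRows (hatM G)
      (Matrix.fromRows
        (-(hatM G).submatrix
            (fun v : {v : Fin nV // G.side v = BipSide.XL} =>
              (⟨(v.1 : ℕ), by have := v.1.isLt; omega⟩ : Fin (nV + r + 1))) id)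
        (1 : Matrix (Fin (nE + r)) (Fin (nE + r)) ℤ))).IsTotallyUnimodular := by
  classical
  have h1 : (Matrix.fromRows
      (Matrix.fromRows (hatM G)
        (-(hatM G).submatrix
            (fun v : {v : Fin nV // G.side v = BipSide.XL} =>
              (⟨(v.1 : ℕ), by have := v.1.isLt; omega⟩ : Fin (nV + r + 1))) id))
      (1 : Matrix (Fin (nE + r)) (Fin (nE + r)) ℤ)).IsTotallyUnimodular :=
    (SCCTU.fromRows_neg_isTotallyUnimodular (hatM G) _
      (SCCTU.hatM_isTotallyUnimodular G)).fromRows_one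
  have h2 := h1.submatrix
    (fun i : Fin (nV + r + 1) ⊕ ({v : Fin nV // G.side v = BipSide.XL} ⊕ Fin (nE + r)) =>
      (Equiv.sumAssoc _ _ _).symm i) id
  convert h2 using 2
  ext i j
  rcases i with v | u
  · rfl
  · rcases u with u | w <;> rfl
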